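/- Let M, K ∈ ℕ with K ≥ 1, let v : Fin M → ℝ, let w : Fin M → ℝ, and fix i ∈ Fin M. Let L_i := {j : j < i}, R_i := {j : j > i}, and let V be the (finite) image of v. Then ∑_{S} (v(i) − v(α_K(S)))/K · (∏_{j ∈ S} w j) · (∏_{j ∉ S ∪ {i}} (1 − w j)) = ∑_{e ∈ V} (v(i) − e)/K · ∑_{j=0}^{K−1} P_j(L_i) · B_{K−j}(R_i, e), where the left-hand sum ranges over S ⊆ (Fin M) \ {i} with |S| ≥ K and |S ∩ L_i| ≤ K−1, P_k(A) := ∑_{S ⊆ A, |S| = k} (∏_{t ∈ S} w t) · (∏_{t ∈ A \ S} (1 − w t)), and B_k(A, e) := ∑_{S ⊆ A, |S| ≥ k, v(α_k(S)) = e} (∏_{t ∈ S} w t) · (∏_{t ∈ A \ S} (1 − w t)). -/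

import Mathlib

/-- `subsetProb w k A` is the probability `P_k(A)` that exactly `k` points of `A` are
sampled when each point `t` is included independently with probability `w t`. -/
def subsetProb {ι : Type*} [DecidableEq ι] (w : ι → ℝ) (k : ℕ) (A : Finset ι) : ℝ :=
  ∑ S ∈ A.powerset.filter (fun S => S.card = k),
    (∏ t ∈ S, w t) * ∏ t ∈ A \ S, (1 - w t)

open scoped Classical in
/-- The boundary value probability `B_k(A, e)`: the total sampling probability of
subsets `S ⊆ A` with `|S| ≥ k` whose `k`-th highest-ranked element has utility value
`e`. -/
noncomputable def boundaryValueProb {M : ℕ} (v w : Fin M → ℝ) (k : ℕ)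
    (A : Finset (Fin M)) (e : ℝ) : ℝ :=
  ∑ S ∈ A.powerset.filter
      (fun S => k ≤ S.card ∧ ((S.sort (· ≤ ·))[k - 1]?).map v = some e),
    (∏ t ∈ S, w t) * ∏ t ∈ A \ S, (1 - w t)

section Aux
open scoped Classical


lemma sort_union_of_lt {M : ℕ} {A B : Finset (Fin M)} (h : ∀ a ∈ A, ∀ b ∈ B, a < b) :
    (A ∪ B).sort (· ≤ ·) = A.sort (· ≤ ·) ++ B.sort (· ≤ ·) := by
  apply List.Perm.eq_of_pairwise' (Finset.pairwise_sort _ _) ?_ ?_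
  · rw [List.pairwise_append]
    exact ⟨Finset.pairwise_sort _ _, Finset.pairwise_sort _ _,
      fun a ha b hb => (h a (by simpa using ha) b (by simpa using hb)).le⟩
  · rw [List.perm_ext_iff_of_nodup (Finset.sort_nodup _ _) ?_]
    · intro a; simp [Finset.mem_sort, Finset.mem_union]
    · rw [List.nodup_append]
      refine ⟨Finset.sort_nodup _ _, Finset.sort_nodup _ _, fun a ha b hb => ?_⟩
      exact ne_of_lt (h a (by simpa using ha) b (by simpa using hb))

variable {M : ℕ} {i : Fin M} {A B S : Finset (Fin M)}

lemma filt_lt_union (hA : A ⊆ Finset.Iio i) (hB : B ⊆ Finset.Ioi i) :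
    (A ∪ B).filter (· < i) = A := by
  ext x
  simp only [Finset.mem_filter, Finset.mem_union]
  constructor
  · rintro ⟨hx | hx, hlt⟩
    · exact hx
    · exact absurd hlt (asymm (Finset.mem_Ioi.mp (hB hx)))
  · intro hx; exact ⟨Or.inl hx, Finset.mem_Iio.mp (hA hx)⟩

lemma filt_gt_union (hA : A ⊆ Finset.Iio i) (hB : B ⊆ Finset.Ioi i) :
    (A ∪ B).filter (fun x => i < x) = B := by
  ext x
  simp only [Finset.mem_filter, Finset.mem_union]
  constructor
  · rintro ⟨hx | hx, hlt⟩
    · exact absurd hlt (asymm (Finset.mem_Iio.mp (hA hx)))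
    · exact hx
  · intro hx; exact ⟨Or.inr hx, Finset.mem_Ioi.mp (hB hx)⟩

lemma union_filters (hS : i ∉ S) :
    S.filter (· < i) ∪ S.filter (fun x => i < x) = S := by
  ext x
  simp only [Finset.mem_union, Finset.mem_filter]
  constructor
  · rintro (⟨h, _⟩ | ⟨h, _⟩) <;> exact h
  · intro hx
    rcases lt_trichotomy x i with h | h | h
    · exact Or.inl ⟨hx, h⟩
    · exact absurd (h ▸ hx) hS
    · exact Or.inr ⟨hx, h⟩

lemma disj_filters : Disjoint (S.filter (· < i)) (S.filter (fun x => i < x)) := by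
  rw [Finset.disjoint_left]
  intro a ha hb
  exact absurd ((Finset.mem_filter.mp ha).2.trans (Finset.mem_filter.mp hb).2) (lt_irrefl a)

lemma compl_union_eq (hA : A ⊆ Finset.Iio i) (hB : B ⊆ Finset.Ioi i) :
    ((A ∪ B) ∪ {i})ᶜ = (Finset.Iio i \ A) ∪ (Finset.Ioi i \ B) := by
  ext x
  simp only [Finset.mem_compl, Finset.mem_union, Finset.mem_singleton, Finset.mem_sdiff,
    Finset.mem_Iio, Finset.mem_Ioi]
  constructor
  · intro h
    push_neg at h
    obtain ⟨⟨hxA, hxB⟩, hxi⟩ := h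
    rcases lt_trichotomy x i with hh | hh | hh
    · exact Or.inl ⟨hh, hxA⟩
    · exact absurd hh hxi
    · exact Or.inr ⟨hh, hxB⟩
  · rintro (⟨hlt, hxA⟩ | ⟨hgt, hxB⟩) <;> push_neg <;> refine ⟨⟨?_, ?_⟩, ?_⟩
    · exact hxA
    · intro hx; exact absurd (hlt.trans (Finset.mem_Ioi.mp (hB hx))) (lt_irrefl x)
    · exact ne_of_lt hlt
    · intro hx; exact absurd ((Finset.mem_Iio.mp (hA hx)).trans hgt) (lt_irrefl x)
    · exact hxB
    · exact ne_of_gt hgt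


lemma collapse_e {M : ℕ} (v : Fin M → ℝ) (d : Fin M) (k : ℕ) (hk : 1 ≤ k)
    (P : Finset (Finset (Fin M))) (F : ℝ → Finset (Fin M) → ℝ) :
    ∑ e ∈ Finset.univ.image v,
        ∑ B ∈ P.filter (fun B => k ≤ B.card ∧ ((B.sort (· ≤ ·))[k - 1]?).map v = some e),
          F e B
      = ∑ B ∈ P.filter (fun B => k ≤ B.card),
          F (v ((B.sort (· ≤ ·)).getD (k - 1) d)) B := by
  have hget : ∀ B : Finset (Fin M), k ≤ B.card →
      ((B.sort (· ≤ ·))[k - 1]?) = some ((B.sort (· ≤ ·)).getD (k - 1) d) := by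
    intro B hB
    have hlen : k - 1 < (B.sort (· ≤ ·)).length := by
      rw [Finset.length_sort]; omega
    rw [List.getElem?_eq_getElem hlen, List.getD_eq_getElem _ _ hlen]
  set g : Finset (Fin M) → ℝ := fun B => v ((B.sort (· ≤ ·)).getD (k - 1) d) with hg
  have hfil : ∀ e : ℝ,
      P.filter (fun B => k ≤ B.card ∧ ((B.sort (· ≤ ·))[k - 1]?).map v = some e)
        = (P.filter (fun B => k ≤ B.card)).filter (fun B => g B = e) := by
    intro e
    rw [Finset.filter_filter]
    apply Finset.filter_congr
    intro B _
    constructor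
    · rintro ⟨h1, h2⟩
      refine ⟨h1, ?_⟩
      rw [hget B h1, Option.map_some] at h2
      exact Option.some.inj h2
    · rintro ⟨h1, h2⟩
      exact ⟨h1, by rw [hget B h1, Option.map_some]; exact congrArg some h2⟩
  calc ∑ e ∈ Finset.univ.image v,
        ∑ B ∈ P.filter (fun B => k ≤ B.card ∧ ((B.sort (· ≤ ·))[k - 1]?).map v = some e), F e B
      = ∑ e ∈ Finset.univ.image v,
        ∑ B ∈ (P.filter (fun B => k ≤ B.card)).filter (fun B => g B = e), F (g B) B := by
        refine Finset.sum_congr rfl fun e _ => ?_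
        rw [hfil e]
        refine Finset.sum_congr rfl fun B hB => ?_
        rw [(Finset.mem_filter.mp hB).2]
    _ = ∑ B ∈ P.filter (fun B => k ≤ B.card), F (g B) B := by
        apply Finset.sum_fiberwise_of_maps_to
        intro B _
        simp [hg]

lemma split_S {M K : ℕ} (hK : 1 ≤ K) (v w : Fin M → ℝ) (i : Fin M) (j : ℕ) (hj : j < K) :
    ∑ S ∈ (({i}ᶜ : Finset (Fin M)).powerset.filter
        (fun S => K ≤ S.card ∧ (S.filter (· < i)).card ≤ K - 1)).filter
        (fun S => (S.filter (· < i)).card = j),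
      (v i - v ((S.sort (· ≤ ·)).getD (K - 1) i)) / (K : ℝ)
        * ((∏ t ∈ S, w t) * ∏ t ∈ (S ∪ {i})ᶜ, (1 - w t))
  = ∑ A ∈ (Finset.Iio i).powerset.filter (fun A => A.card = j),
      ∑ B ∈ (Finset.Ioi i).powerset.filter (fun B => K - j ≤ B.card),
        (v i - v ((B.sort (· ≤ ·)).getD (K - j - 1) i)) / (K : ℝ)
          * (((∏ t ∈ A, w t) * ∏ t ∈ Finset.Iio i \ A, (1 - w t))
            * ((∏ t ∈ B, w t) * ∏ t ∈ Finset.Ioi i \ B, (1 - w t))) := by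
  rw [← Finset.sum_product']
  refine Finset.sum_nbij' (fun S => (S.filter (· < i), S.filter (fun x => i < x)))
    (fun p => p.1 ∪ p.2) ?_ ?_ ?_ ?_ ?_
  · -- maps to
    intro S hS
    simp only [Finset.mem_filter, Finset.mem_powerset] at hS
    obtain ⟨⟨hSsub, hScard, _⟩, hjcard⟩ := hS
    have hiS : i ∉ S := fun h => by simpa using hSsub h
    have hA : S.filter (· < i) ⊆ Finset.Iio i := fun x hx => by
      simpa using (Finset.mem_filter.mp hx).2
    have hB : S.filter (fun x => i < x) ⊆ Finset.Ioi i := fun x hx => by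
      simpa using (Finset.mem_filter.mp hx).2
    simp only [Finset.mem_product, Finset.mem_filter, Finset.mem_powerset]
    refine ⟨⟨hA, hjcard⟩, hB, ?_⟩
    have hcard : (S.filter (· < i)).card + (S.filter (fun x => i < x)).card = S.card := by
      rw [← Finset.card_union_of_disjoint disj_filters, union_filters hiS]
    omega
  · -- maps back
    rintro ⟨A, B⟩ hp
    simp only [Finset.mem_product, Finset.mem_filter, Finset.mem_powerset] at hp
    obtain ⟨⟨hA, hAcard⟩, hB, hBcard⟩ := hp
    have hd : Disjoint A B := by
      rw [Finset.disjoint_left]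
      intro a ha hb
      exact absurd ((Finset.mem_Iio.mp (hA ha)).trans (Finset.mem_Ioi.mp (hB hb))) (lt_irrefl a)
    simp only [Finset.mem_filter, Finset.mem_powerset]
    have hcard : (A ∪ B).card = A.card + B.card := Finset.card_union_of_disjoint hd
    refine ⟨⟨?_, ?_, ?_⟩, ?_⟩
    · intro x hx
      simp only [Finset.mem_union] at hx
      simp only [Finset.mem_compl, Finset.mem_singleton]
      rcases hx with hx | hx
      · exact ne_of_lt (Finset.mem_Iio.mp (hA hx))
      · exact ne_of_gt (Finset.mem_Ioi.mp (hB hx))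
    · omega
    · rw [filt_lt_union hA hB]; omega
    · rw [filt_lt_union hA hB]; omega
  · -- left inverse
    intro S hS
    simp only [Finset.mem_filter, Finset.mem_powerset] at hS
    have hiS : i ∉ S := fun h => by simpa using hS.1.1 h
    exact union_filters hiS
  · -- right inverse
    rintro ⟨A, B⟩ hp
    simp only [Finset.mem_product, Finset.mem_filter, Finset.mem_powerset] at hp
    obtain ⟨⟨hA, _⟩, hB, _⟩ := hp
    simp only [Prod.mk.injEq]
    exact ⟨filt_lt_union hA hB, filt_gt_union hA hB⟩
  · -- values agree
    intro S hS
    simp only [Finset.mem_filter, Finset.mem_powerset] at hS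
    obtain ⟨⟨hSsub, hScard, _⟩, hjcard⟩ := hS
    have hiS : i ∉ S := fun h => by simpa using hSsub h
    have hA : S.filter (· < i) ⊆ Finset.Iio i := fun x hx => by
      simpa using (Finset.mem_filter.mp hx).2
    have hB : S.filter (fun x => i < x) ⊆ Finset.Ioi i := fun x hx => by
      simpa using (Finset.mem_filter.mp hx).2
    have hU : S.filter (· < i) ∪ S.filter (fun x => i < x) = S := union_filters hiS
    have hlt : ∀ a ∈ S.filter (· < i), ∀ b ∈ S.filter (fun x => i < x), a < b := by
      intro a ha b hb
      exact (Finset.mem_filter.mp ha).2.trans (Finset.mem_filter.mp hb).2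
    have hsort : S.sort (· ≤ ·) = (S.filter (· < i)).sort (· ≤ ·) ++ (S.filter (fun x => i < x)).sort (· ≤ ·) := by
      conv_lhs => rw [← hU]
      exact sort_union_of_lt hlt
    have hgetD : (S.sort (· ≤ ·)).getD (K - 1) i
        = ((S.filter (fun x => i < x)).sort (· ≤ ·)).getD (K - j - 1) i := by
      rw [hsort, List.getD_append_right _ _ _ _ (by rw [Finset.length_sort]; omega),
        Finset.length_sort, hjcard]
      congr 1
      omega
    have hprod : ∏ t ∈ S, w t
        = (∏ t ∈ S.filter (· < i), w t) * ∏ t ∈ S.filter (fun x => i < x), w t := by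
      rw [← Finset.prod_union disj_filters, hU]
    have hcompl : (S ∪ {i})ᶜ
        = (Finset.Iio i \ S.filter (· < i)) ∪ (Finset.Ioi i \ S.filter (fun x => i < x)) := by
      conv_lhs => rw [← hU]
      exact compl_union_eq hA hB
    have hdisj2 : Disjoint (Finset.Iio i \ S.filter (· < i)) (Finset.Ioi i \ S.filter (fun x => i < x)) := by
      refine Finset.disjoint_of_subset_left (Finset.sdiff_subset) ?_
      refine Finset.disjoint_of_subset_right (Finset.sdiff_subset) ?_
      rw [Finset.disjoint_left]
      intro a ha hb
      exact absurd ((Finset.mem_Iio.mp ha).trans (Finset.mem_Ioi.mp hb)) (lt_irrefl a)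
    rw [hgetD, hprod, hcompl, Finset.prod_union hdisj2]
    ring

end Aux

open scoped Classical in
/-- The gradient contribution `G_2` of subsets of size at least `K` into which point
`i` enters the `K`-nearest-neighbor set (expelling `α_K(S)`) equals
`∑_{e ∈ V} (v i - e)/K · ∑_{j=0}^{K-1} P_j(L_i) · B_{K-j}(R_i, e)`. -/
theorem G2_decomposition (M K : ℕ) (hK : 1 ≤ K) (v w : Fin M → ℝ) (i : Fin M) :
    (∑ S ∈ ({i}ᶜ : Finset (Fin M)).powerset.filter
          (fun S => K ≤ S.card ∧ (S.filter (· < i)).card ≤ K - 1),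
        (v i - v ((S.sort (· ≤ ·)).getD (K - 1) i)) / (K : ℝ)
          * ((∏ j ∈ S, w j) * ∏ j ∈ (S ∪ {i})ᶜ, (1 - w j)))
      = ∑ e ∈ Finset.univ.image v,
          (v i - e) / (K : ℝ)
            * ∑ j ∈ Finset.range K,
                subsetProb w j (Finset.Iio i)
                  * boundaryValueProb v w (K - j) (Finset.Ioi i) e := by
  have hmaps : ∀ S ∈ (({i}ᶜ : Finset (Fin M)).powerset.filter
      (fun S => K ≤ S.card ∧ (S.filter (· < i)).card ≤ K - 1)),
      (S.filter (· < i)).card ∈ Finset.range K := by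
    intro S hS
    simp only [Finset.mem_filter] at hS
    rw [Finset.mem_range]; omega
  rw [← Finset.sum_fiberwise_of_maps_to hmaps
    (fun S => (v i - v ((S.sort (· ≤ ·)).getD (K - 1) i)) / (K : ℝ)
      * ((∏ j ∈ S, w j) * ∏ j ∈ (S ∪ {i})ᶜ, (1 - w j)))]
  calc ∑ j ∈ Finset.range K,
        ∑ S ∈ (({i}ᶜ : Finset (Fin M)).powerset.filter
            (fun S => K ≤ S.card ∧ (S.filter (· < i)).card ≤ K - 1)).filter
            (fun S => (S.filter (· < i)).card = j),
          (v i - v ((S.sort (· ≤ ·)).getD (K - 1) i)) / (K : ℝ)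
            * ((∏ t ∈ S, w t) * ∏ t ∈ (S ∪ {i})ᶜ, (1 - w t))
      = ∑ j ∈ Finset.range K,
          ∑ A ∈ (Finset.Iio i).powerset.filter (fun A => A.card = j),
            ∑ B ∈ (Finset.Ioi i).powerset.filter (fun B => K - j ≤ B.card),
              (v i - v ((B.sort (· ≤ ·)).getD (K - j - 1) i)) / (K : ℝ)
                * (((∏ t ∈ A, w t) * ∏ t ∈ Finset.Iio i \ A, (1 - w t))
                  * ((∏ t ∈ B, w t) * ∏ t ∈ Finset.Ioi i \ B, (1 - w t))) :=
        Finset.sum_congr rfl fun j hj => split_S hK v w i j (Finset.mem_range.mp hj)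
    _ = ∑ j ∈ Finset.range K,
          ∑ A ∈ (Finset.Iio i).powerset.filter (fun A => A.card = j),
            ∑ e ∈ Finset.univ.image v,
              ∑ B ∈ (Finset.Ioi i).powerset.filter
                  (fun B => K - j ≤ B.card ∧ ((B.sort (· ≤ ·))[K - j - 1]?).map v = some e),
                (v i - e) / (K : ℝ)
                  * (((∏ t ∈ A, w t) * ∏ t ∈ Finset.Iio i \ A, (1 - w t))
                    * ((∏ t ∈ B, w t) * ∏ t ∈ Finset.Ioi i \ B, (1 - w t))) := by
        refine Finset.sum_congr rfl fun j hj => Finset.sum_congr rfl fun A hA => ?_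
        rw [collapse_e v i (K - j) (by have := Finset.mem_range.mp hj; omega)
          ((Finset.Ioi i).powerset)
          (fun e B => (v i - e) / (K : ℝ)
            * (((∏ t ∈ A, w t) * ∏ t ∈ Finset.Iio i \ A, (1 - w t))
              * ((∏ t ∈ B, w t) * ∏ t ∈ Finset.Ioi i \ B, (1 - w t))))]
    _ = ∑ e ∈ Finset.univ.image v,
          ∑ j ∈ Finset.range K,
            ∑ A ∈ (Finset.Iio i).powerset.filter (fun A => A.card = j),
              ∑ B ∈ (Finset.Ioi i).powerset.filter
                  (fun B => K - j ≤ B.card ∧ ((B.sort (· ≤ ·))[K - j - 1]?).map v = some e),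
                (v i - e) / (K : ℝ)
                  * (((∏ t ∈ A, w t) * ∏ t ∈ Finset.Iio i \ A, (1 - w t))
                    * ((∏ t ∈ B, w t) * ∏ t ∈ Finset.Ioi i \ B, (1 - w t))) := by
        rw [Finset.sum_comm]
        exact Finset.sum_congr rfl fun j hj => Finset.sum_comm
    _ = ∑ e ∈ Finset.univ.image v,
          (v i - e) / (K : ℝ)
            * ∑ j ∈ Finset.range K,
                subsetProb w j (Finset.Iio i)
                  * boundaryValueProb v w (K - j) (Finset.Ioi i) e := by
        refine Finset.sum_congr rfl fun e _ => ?_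
        rw [Finset.mul_sum]
        refine Finset.sum_congr rfl fun j hj => ?_
        simp only [subsetProb, boundaryValueProb]
        rw [Finset.sum_mul_sum, Finset.mul_sum]
        refine Finset.sum_congr rfl fun A _ => ?_
        rw [Finset.mul_sum]
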